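/- An ortholattice satisfies the condition (a →₁ b = 1 ⟺ a ≤ b), where a →₁ b := a' ∪ (a∩b) (the Sasaki hook), if and only if it is orthomodular. -/

import Mathlib

/-- An ortholattice as an algebra ⟨α, ', ∪, ∩⟩ with join `j` and
orthocomplement `c` primitive, and meet defined by De Morgan. -/
structure OrthoLattice (α : Type*) where
  j : α → α → α
  c : α → α
  j_comm : ∀ a b, j a b = j b a
  j_assoc : ∀ a b d, j (j a b) d = j a (j b d)
  c_invol : ∀ a, c (c a) = a
  j_top : ∀ a b, j a (j b (c b)) = j b (c b)
  absorb : ∀ a b, j a (c (j (c a) (c b))) = a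

namespace OrthoLattice

variable {α : Type*}

/-- meet: a ∩ b = (a' ∪ b')' -/
def m (L : OrthoLattice α) (a b : α) : α := L.c (L.j (L.c a) (L.c b))

/-- the unit 1 = a ∪ a' -/
def one (L : OrthoLattice α) (a : α) : α := L.j a (L.c a)

/-- quantum equivalence a ≡ b = (a∩b) ∪ (a'∩b') -/
def equiv (L : OrthoLattice α) (a b : α) : α := L.j (L.m a b) (L.m (L.c a) (L.c b))

/-- classical equivalence a ≡₀ b = (a'∪b) ∩ (a∪b') -/
def equiv0 (L : OrthoLattice α) (a b : α) : α := L.m (L.j (L.c a) b) (L.j a (L.c b))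

/-- Sasaki hook a →₁ b = a' ∪ (a ∩ b) -/
def sasaki (L : OrthoLattice α) (a b : α) : α := L.j (L.c a) (L.m a b)

end OrthoLattice

/-!
If a ≤ b then a →₁ b = a' ∪ a = 1 in any ortholattice, so only the converse is at stake.
In an orthomodular lattice, a' ∪ (a ∩ b) = 1 says that x := a ∩ b ≤ a has x' ∩ a = 0, and
orthomodularity for x ≤ a gives a = x ∪ (x' ∩ a) = x. Conversely, d := a ∪ (a' ∩ (a ∪ b))
lies below u := a ∪ b and u →₁ d = u' ∪ a ∪ (a' ∩ u) = 1, because u' ∪ a is the complement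
of a' ∩ u; hence u ≤ d, and d = u is the orthomodular law.
-/

namespace OrthoLattice

variable {α : Type*} (L : OrthoLattice α)

def IsOrthomodular : Prop :=
  ∀ a b : α, L.j a (L.m (L.c a) (L.j a b)) = L.j a b

theorem c_j (a b : α) : L.c (L.j a b) = L.m (L.c a) (L.c b) := by
  rw [m, L.c_invol, L.c_invol]

theorem c_m (a b : α) : L.c (L.m a b) = L.j (L.c a) (L.c b) :=
  L.c_invol _

theorem m_comm (a b : α) : L.m a b = L.m b a := by
  rw [m, m, L.j_comm]

theorem j_m_self (a b : α) : L.j a (L.m a b) = a :=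
  L.absorb a b

theorem m_j_self (a b : α) : L.m a (L.j a b) = a := by
  have h := L.absorb (L.c a) (L.c b)
  rw [L.c_invol, L.c_invol] at h
  rw [m, h, L.c_invol]

theorem j_self (a : α) : L.j a a = a := by
  have h := L.j_m_self a (L.j a a)
  rwa [m_j_self] at h

theorem m_eq_left_of_j_eq_right {a b : α} (h : L.j a b = b) : L.m a b = a := by
  rw [← h, m_j_self]

theorem one_eq (a b : α) : L.one a = L.one b := by
  calc L.one a = L.j (L.one b) (L.one a) := (L.j_top _ a).symm
    _ = L.j (L.one a) (L.one b) := L.j_comm _ _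
    _ = L.one b := L.j_top _ b

theorem j_c_one (x a : α) : L.j x (L.c (L.one a)) = x := by
  rw [L.one_eq a x, one, c_j, L.c_invol, m_comm]
  exact L.j_m_self x _

theorem sasaki_eq_one_of_m_eq_left {a b : α} (h : L.m a b = a) : L.sasaki a b = L.one a := by
  rw [sasaki, h, L.j_comm]
  rfl

theorem m_eq_left_of_sasaki_eq_one (hL : L.IsOrthomodular) {a b : α}
    (h : L.sasaki a b = L.one a) : L.m a b = a := by
  have hle : L.j (L.m a b) a = a := by rw [L.j_comm]; exact L.j_m_self a b
  have hzero : L.m (L.c (L.m a b)) a = L.c (L.one a) := by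
    rw [← h, sasaki, c_j, L.c_invol, m_comm]
  have := hL (L.m a b) a
  rwa [hle, hzero, j_c_one] at this

theorem j_c_j_m_c_eq_one (a u : α) : L.j (L.c u) (L.j a (L.m (L.c a) u)) = L.one u := by
  have hc : L.c (L.m (L.c a) u) = L.j a (L.c u) := by rw [c_m, L.c_invol]
  rw [← L.j_assoc, L.j_comm (L.c u) a, ← hc, L.one_eq u (L.c (L.m (L.c a) u)), one, L.c_invol]

theorem isOrthomodular_of_sasaki_eq_one
    (H : ∀ a b : α, L.sasaki a b = L.one a → L.m a b = a) : L.IsOrthomodular := by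
  intro a b
  set u := L.j a b
  set d := L.j a (L.m (L.c a) u)
  have hdu : L.j d u = u := by
    rw [L.j_assoc, L.j_comm _ u, L.m_comm, L.j_m_self, ← L.j_assoc, L.j_self]
  have hmud : L.m u d = d := by rw [m_comm]; exact L.m_eq_left_of_j_eq_right hdu
  have humd : L.m u d = u := H u d (by rw [sasaki, hmud, j_c_j_m_c_eq_one])
  exact hmud.symm.trans humd

end OrthoLattice

/-- an ortholattice satisfies (a →₁ b = 1 ⟺ a ≤ b) iff it is
orthomodular. -/
theorem stmt6 {α : Type*} (L : OrthoLattice α) :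
    (∀ a b : α, L.sasaki a b = L.one a ↔ L.m a b = a) ↔
      (∀ a b : α, L.j a (L.m (L.c a) (L.j a b)) = L.j a b) :=
  ⟨fun H => L.isOrthomodular_of_sasaki_eq_one fun a b => (H a b).1,
    fun hL _ _ => ⟨L.m_eq_left_of_sasaki_eq_one hL, L.sasaki_eq_one_of_m_eq_left⟩⟩
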